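/- Let P be a real m×n matrix, x ∈ ℝ^n, ζ > 0, and let f : ℝ → ℝ be convex and twice differentiable. Define res_x(Δ) = ∑_i f'((Px)_i)(PΔ)_i − (2e)^{−1}∑_i f''((Px)_i)(PΔ)_i². Let Δ* ∈ ℝ^n and suppose there is η > 0 such that res_x(λ·Δ*) ≤ res_x(Δ*) for all λ ∈ (1−η, 1+η), and that res_x(Δ*) ≤ ζ. Then ∑_i f''((Px)_i)·(PΔ*)_i² = 2e·res_x(Δ*) ≤ 2e·ζ. -/

import Mathlib

open scoped BigOperators

/-
Along the ray t ↦ t • Δ the residual is the quadratic t·L − (2e)⁻¹·t²·Q, with L the linear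
and Q the quadratic sum at Δ. A local maximum at t = 1 makes its derivative L − e⁻¹·Q vanish,
so res(Δ) = L − (2e)⁻¹·Q = (2e)⁻¹·Q.
-/

/-- The residual objective res_x(Δ) (with the corrected constant (2e)⁻¹). -/
noncomputable def resObj (m n : ℕ) (P : Matrix (Fin m) (Fin n) ℝ)
    (f : ℝ → ℝ) (x Δ : Fin n → ℝ) : ℝ :=
  (∑ i, deriv f ((P.mulVec x) i) * (P.mulVec Δ) i) -
    (2 * Real.exp 1)⁻¹ * ∑ i, deriv (deriv f) ((P.mulVec x) i) * (P.mulVec Δ) i ^ 2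

lemma eq_two_mul_of_isLocalMax_one {a b : ℝ}
    (h : IsLocalMax (fun t : ℝ => t * a - t ^ 2 * b) 1) : a = 2 * b := by
  have hderiv : HasDerivAt (fun t : ℝ => t * a - t ^ 2 * b) (1 * a - (2 * 1 ^ 1) * b) 1 :=
    ((hasDerivAt_id 1).mul_const a).sub ((hasDerivAt_pow 2 1).mul_const b)
  have := h.hasDerivAt_eq_zero hderiv
  linarith

lemma resObj_smul (m n : ℕ) (P : Matrix (Fin m) (Fin n) ℝ) (f : ℝ → ℝ) (x Δ : Fin n → ℝ)
    (t : ℝ) :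
    resObj m n P f x (t • Δ) =
      t * ∑ i, deriv f ((P.mulVec x) i) * (P.mulVec Δ) i -
        t ^ 2 * ((2 * Real.exp 1)⁻¹ *
          ∑ i, deriv (deriv f) ((P.mulVec x) i) * (P.mulVec Δ) i ^ 2) := by
  simp only [resObj, Matrix.mulVec_smul, Pi.smul_apply, smul_eq_mul, Finset.mul_sum]
  congr 1
  · exact Finset.sum_congr rfl fun i _ => by ring
  · exact Finset.sum_congr rfl fun i _ => by ring

theorem residual_quadratic_bound_general
    (m n : ℕ) (P : Matrix (Fin m) (Fin n) ℝ) (x : Fin n → ℝ)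
    (ζ : ℝ)
    (f : ℝ → ℝ)
    (Δstar : Fin n → ℝ) (η : ℝ) (hη : 0 < η)
    (hloc : ∀ lam : ℝ, lam ∈ Set.Ioo (1 - η) (1 + η) →
      resObj m n P f x (lam • Δstar) ≤ resObj m n P f x Δstar)
    (hub : resObj m n P f x Δstar ≤ ζ) :
    (∑ i, deriv (deriv f) ((P.mulVec x) i) * (P.mulVec Δstar) i ^ 2) =
        2 * Real.exp 1 * resObj m n P f x Δstar ∧
      (∑ i, deriv (deriv f) ((P.mulVec x) i) * (P.mulVec Δstar) i ^ 2) ≤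
        2 * Real.exp 1 * ζ := by
  set L := ∑ i, deriv f ((P.mulVec x) i) * (P.mulVec Δstar) i
  set Q := ∑ i, deriv (deriv f) ((P.mulVec x) i) * (P.mulVec Δstar) i ^ 2
  have hres : ∀ t : ℝ,
      resObj m n P f x (t • Δstar) = t * L - t ^ 2 * ((2 * Real.exp 1)⁻¹ * Q) :=
    resObj_smul m n P f x Δstar
  have hmax : IsLocalMax (fun t : ℝ => t * L - t ^ 2 * ((2 * Real.exp 1)⁻¹ * Q)) 1 := by
    filter_upwards [Ioo_mem_nhds (by linarith : 1 - η < 1) (by linarith : 1 < 1 + η)] with t ht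
    simpa only [← hres, one_smul] using hloc t ht
  have hL := eq_two_mul_of_isLocalMax_one hmax
  have hkey : Q = 2 * Real.exp 1 * resObj m n P f x Δstar := by
    rw [← one_smul ℝ Δstar, hres, hL]
    field_simp
    ring
  exact ⟨hkey, hkey ▸ mul_le_mul_of_nonneg_left hub (by positivity)⟩

/-- Lemma 4.4: local optimality of Δ* under scaling bounds the quadratic term:
∑ f''((Px)_i)(PΔ*)_i² = 2e·res(Δ*) ≤ 2e·ζ. -/
theorem residual_quadratic_bound
    (m n : ℕ) (P : Matrix (Fin m) (Fin n) ℝ) (x : Fin n → ℝ)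
    (ζ : ℝ) (hζ : 0 < ζ)
    (f : ℝ → ℝ) (hconv : ConvexOn ℝ Set.univ f)
    (hf1 : Differentiable ℝ f) (hf2 : Differentiable ℝ (deriv f))
    (Δstar : Fin n → ℝ) (η : ℝ) (hη : 0 < η)
    (hloc : ∀ lam : ℝ, lam ∈ Set.Ioo (1 - η) (1 + η) →
      resObj m n P f x (lam • Δstar) ≤ resObj m n P f x Δstar)
    (hub : resObj m n P f x Δstar ≤ ζ) :
    (∑ i, deriv (deriv f) ((P.mulVec x) i) * (P.mulVec Δstar) i ^ 2) =
        2 * Real.exp 1 * resObj m n P f x Δstar ∧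
      (∑ i, deriv (deriv f) ((P.mulVec x) i) * (P.mulVec Δstar) i ^ 2) ≤
        2 * Real.exp 1 * ζ :=
  residual_quadratic_bound_general m n P x ζ f Δstar η hη hloc hub
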